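/- arXiv:2312.06520 — 7 statements merged into one kernel-verified Lean document; each statement's English description precedes it below -/
import Mathlib

section
/- Let T be a skew truss. Define Γ : T × T → T by Γ(a, b) = ω(a)^{⋄₁} ⋄₁ (a ⋄₂ b). Then Γ is a semigroup action of (T, ⋄₂) on T, i.e., Γ(a ⋄₂ b, c) = Γ(a, Γ(b, c)) for all a, b, c ∈ T. -/
/-- In a skew truss, `Γ a b = (ω a)⁻¹ ⋄₁ (a ⋄₂ b)` is a semigroup action of
`(T, ⋄₂)` on `T`. -/
theorem skew_truss_Gamma_action {T : Type*} [Group T] (op2 : T → T → T)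
    (hassoc : ∀ a b c : T, op2 (op2 a b) c = op2 a (op2 b c))
    (ω : T → T)
    (htruss : ∀ a b c : T, op2 a (b * c) = op2 a b * (ω a)⁻¹ * op2 a c) :
    ∀ a b c : T, (ω (op2 a b))⁻¹ * op2 (op2 a b) c =
      (ω a)⁻¹ * op2 a ((ω b)⁻¹ * op2 b c) := by
  -- Step 1: ω a = op2 a 1.
  have hω : ∀ a : T, ω a = op2 a 1 := by
    intro a
    have h := htruss a 1 1
    rw [one_mul, mul_assoc] at h
    -- h : op2 a 1 = op2 a 1 * ((ω a)⁻¹ * op2 a 1)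
    have h1 : (ω a)⁻¹ * op2 a 1 = 1 := by
      have := mul_left_cancel (a := op2 a 1) (by rw [mul_one]; exact h.symm :
        op2 a 1 * ((ω a)⁻¹ * op2 a 1) = op2 a 1 * 1)
      exact this
    exact (inv_mul_eq_one.mp h1)
  -- Step 2: op2 a x⁻¹ = ω a * (op2 a x)⁻¹ * ω a.
  have hinv : ∀ a x : T, op2 a x⁻¹ = ω a * (op2 a x)⁻¹ * ω a := by
    intro a x
    have h := htruss a x x⁻¹
    rw [mul_inv_cancel, ← hω] at h
    -- h : ω a = op2 a x * (ω a)⁻¹ * op2 a x⁻¹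
    have : op2 a x⁻¹ = ((op2 a x * (ω a)⁻¹))⁻¹ * ω a := by
      rw [eq_inv_mul_iff_mul_eq, ← h]
    rw [this, mul_inv_rev, inv_inv]
  -- Step 3: ω (op2 a b) = op2 a (ω b).
  have hωab : ∀ a b : T, ω (op2 a b) = op2 a (ω b) := by
    intro a b
    rw [hω (op2 a b), hassoc, ← hω]
  intro a b c
  rw [hωab, htruss a ((ω b)⁻¹) (op2 b c), hinv, ← hassoc]
  group
end

section
/- Let T be a skew truss and Γ(a, b) = ω(a)^{⋄₁} ⋄₁ (a ⋄₂ b). Then for all a, b, c ∈ T, Γ(a, 1_{⋄₁}) = 1_{⋄₁} and Γ(a, b ⋄₁ c) = Γ(a, b) ⋄₁ Γ(a, c). -/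
/-- In a skew truss, `Γ a` acts by automorphisms on the group `(T, ⋄₁)`. -/
theorem skew_truss_Gamma_automorphism {T : Type*} [Group T] (op2 : T → T → T)
    (hassoc : ∀ a b c : T, op2 (op2 a b) c = op2 a (op2 b c))
    (ω : T → T)
    (htruss : ∀ a b c : T, op2 a (b * c) = op2 a b * (ω a)⁻¹ * op2 a c) :
    (∀ a b c : T, (ω a)⁻¹ * op2 a (b * c) =
        ((ω a)⁻¹ * op2 a b) * ((ω a)⁻¹ * op2 a 1)⁻¹ * ((ω a)⁻¹ * op2 a c)) ∧
    (∀ a : T, (ω a)⁻¹ * op2 a 1 = 1) ∧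
    (∀ a b c : T, (ω a)⁻¹ * op2 a (b * c) =
        ((ω a)⁻¹ * op2 a b) * ((ω a)⁻¹ * op2 a c)) := by
  have hone : ∀ a : T, (ω a)⁻¹ * op2 a 1 = 1 := by
    intro a
    have h := htruss a 1 1
    rw [one_mul] at h
    have h2 : op2 a 1 * 1 = op2 a 1 * ((ω a)⁻¹ * op2 a 1) := by
      rw [mul_one, ← mul_assoc, ← h]
    exact (mul_left_cancel h2).symm
  refine ⟨?_, hone, ?_⟩ <;> intro a b c <;> rw [htruss a b c] <;>
    simp [hone a, mul_assoc]
end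

section
/- Let G be a group acting on a group H by automorphisms via φ : G → Aut(H), and let π : G → H be a bijective 1-cocycle, i.e., π(a b) = π(a) · φ(a)(π(b)) for all a, b ∈ G. Then transporting the group structure of G to H along π by defining x ∘ y := π(π⁻¹(x) π⁻¹(y)) makes (H, ·, ∘) a skew brace: x ∘ (y · z) = (x ∘ y) · x^{-1} · (x ∘ z) for all x, y, z ∈ H, where x^{-1} is the inverse in (H, ·). -/
/-- Transporting the group structure of `G` along a bijective 1-cocycle
`π : G → H` yields a skew brace structure on `H`. -/
theorem bijective_cocycle_gives_skew_brace {G H : Type*} [Group G] [Group H]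
    (φ : G →* MulAut H) (π : G ≃ H)
    (hcoc : ∀ a b : G, π (a * b) = π a * φ a (π b)) :
    ∀ x y z : H,
      π (π.symm x * π.symm (y * z)) =
        π (π.symm x * π.symm y) * x⁻¹ * π (π.symm x * π.symm z) := by
  intro x y z
  simp only [hcoc, Equiv.apply_symm_apply, map_mul]
  group
end

section
/- Let H be a group, B a semigroup acting on H by a map φ : B × H → H such that each φ(b, ·) is a group endomorphism of H and φ(b₁ b₂, h) = φ(b₁, φ(b₂, h)), and let π : B → H be a bijection and θ : B → B a map such that π(b₁ b₂) = π(θ(b₁)) · φ(b₁, π(b₂)) for all b₁, b₂ ∈ B (a generalized invertible 1-cocycle). Transport the semigroup structure of B to H by defining x ∘ y := π(π⁻¹(x) π⁻¹(y)), and define σ := π ∘ θ ∘ π⁻¹ : H → H. Then (H, ·, ∘, σ) is a skew truss: x ∘ (y · z) = (x ∘ y) · σ(x)^{-1} · (x ∘ z) for all x, y, z ∈ H, where · is the group operation of H. -/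
/-- Transporting the semigroup structure of `B` along a generalized invertible
1-cocycle `π : B → H` with twisting `θ` yields a skew truss structure on `H`
with cocycle `σ = π ∘ θ ∘ π⁻¹`. -/
theorem generalized_cocycle_gives_skew_truss {B H : Type*} [Semigroup B] [Group H]
    (φ : B → H → H)
    (hφmul : ∀ b (h h' : H), φ b (h * h') = φ b h * φ b h')
    (hφone : ∀ b : B, φ b 1 = 1)
    (hφcomp : ∀ (b₁ b₂ : B) (h : H), φ (b₁ * b₂) h = φ b₁ (φ b₂ h))
    (π : B ≃ H) (θ : B → B)
    (hcoc : ∀ b₁ b₂ : B, π (b₁ * b₂) = π (θ b₁) * φ b₁ (π b₂)) :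
    ∀ x y z : H,
      π (π.symm x * π.symm (y * z)) =
        π (π.symm x * π.symm y) * (π (θ (π.symm x)))⁻¹ *
          π (π.symm x * π.symm z) := by
  intro x y z
  simp only [hcoc, Equiv.apply_symm_apply, hφmul]
  group
end

section
/- Let T be a skew truss and M a set equipped with a group action ψ₁ : T × M → M of (T, ⋄₁) and a semigroup action ψ₂ : T × M → M of (T, ⋄₂), satisfying the compatibility ψ₂(a, ψ₁(b, m)) = ψ₁(a ⋄₂ b, Γ_M(a, m)) where Γ_M(a, m) = ψ₁(ω(a)^{⋄₁}, ψ₂(a, m)). Then Γ_M is a semigroup action of (T, ⋄₂) on M: Γ_M(a ⋄₂ b, m) = Γ_M(a, Γ_M(b, m)), and moreover Γ_M(a, ψ₁(b, m)) = ψ₁(Γ(a,b), Γ_M(a, m)) where Γ(a,b) = ω(a)^{⋄₁} ⋄₁ (a ⋄₂ b). -/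
/-- For a module `M` over a skew truss `T`, the twisted action
`Γ_M a m = ψ₁ ((ω a)⁻¹, ψ₂ (a, m))` is a semigroup action of `(T,⋄₂)` on `M`,
and intertwines `ψ₁` with the action `Γ` of `T` on itself. -/
theorem skew_truss_module_Gamma {T M : Type*} [Group T]
    (op2 : T → T → T)
    (hassoc : ∀ a b c : T, op2 (op2 a b) c = op2 a (op2 b c))
    (ω : T → T)
    (htruss : ∀ a b c : T, op2 a (b * c) = op2 a b * (ω a)⁻¹ * op2 a c)
    (ψ₁ : T → M → M) (ψ₂ : T → M → M)
    (hψ₁one : ∀ m : M, ψ₁ 1 m = m)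
    (hψ₁mul : ∀ (a b : T) (m : M), ψ₁ (a * b) m = ψ₁ a (ψ₁ b m))
    (hψ₂mul : ∀ (a b : T) (m : M), ψ₂ (op2 a b) m = ψ₂ a (ψ₂ b m))
    (hcompat : ∀ (a b : T) (m : M),
      ψ₂ a (ψ₁ b m) = ψ₁ (op2 a b) (ψ₁ (ω a)⁻¹ (ψ₂ a m))) :
    (∀ (a b : T) (m : M),
      ψ₁ (ω (op2 a b))⁻¹ (ψ₂ (op2 a b) m) =
        ψ₁ (ω a)⁻¹ (ψ₂ a (ψ₁ (ω b)⁻¹ (ψ₂ b m)))) ∧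
    (∀ (a b : T) (m : M),
      ψ₁ (ω a)⁻¹ (ψ₂ a (ψ₁ b m)) =
        ψ₁ ((ω a)⁻¹ * op2 a b) (ψ₁ (ω a)⁻¹ (ψ₂ a m))) := by
  -- ω a = op2 a 1
  have hω : ∀ a : T, ω a = op2 a 1 := by
    intro a
    have h := htruss a 1 1
    simp only [mul_one] at h
    have h2 : op2 a 1 * ((ω a)⁻¹ * op2 a 1) = op2 a 1 * 1 := by
      rw [mul_one, ← mul_assoc, ← h]
    have h3 := mul_left_cancel h2
    exact inv_mul_eq_one.mp h3
  -- key group identity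
  have hkey : ∀ a b : T, (ω a)⁻¹ * op2 a (ω b)⁻¹ * (ω a)⁻¹ = (ω (op2 a b))⁻¹ := by
    intro a b
    have hωab : ω (op2 a b) = op2 a (ω b) := by
      rw [hω (op2 a b), hassoc, ← hω b]
    have h := htruss a (ω b) (ω b)⁻¹
    rw [mul_inv_cancel, ← hω a] at h
    have h5 : ω a * (op2 a (ω b))⁻¹ * ω a = op2 a (ω b)⁻¹ := by
      calc ω a * (op2 a (ω b))⁻¹ * ω a
          = ω a * (op2 a (ω b))⁻¹ * (op2 a (ω b) * (ω a)⁻¹ * op2 a (ω b)⁻¹) := by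
            rw [← h]
        _ = op2 a (ω b)⁻¹ := by group
    rw [hωab, ← h5]
    group
  have part2 : ∀ (a b : T) (m : M),
      ψ₁ (ω a)⁻¹ (ψ₂ a (ψ₁ b m)) =
        ψ₁ ((ω a)⁻¹ * op2 a b) (ψ₁ (ω a)⁻¹ (ψ₂ a m)) := by
    intro a b m
    rw [hcompat, hψ₁mul]
  refine ⟨?_, part2⟩
  intro a b m
  rw [hψ₂mul, part2, ← hkey a b, hψ₁mul, hψ₁mul]
end

section
/- Let M be a left Hopf module over a Hopf algebra H over a field F. The map q_M : M → M defined by q_M(m) = S(m_{[-1]}) · m_{[0]} (where ρ(m) = m_{[-1]} ⊗ m_{[0]} is the left coaction) is idempotent, and its image is contained in the coinvariants: ρ(q_M(m)) = 1_H ⊗ q_M(m) for all m ∈ M. -/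
open TensorProduct

/-!
Write `ρ m = m₍₋₁₎ ⊗ m₍₀₎` and `q m = S(m₍₋₁₎) · m₍₀₎`. Since the antipode is an anti-coalgebra map,
`Δ (S h) = S h₍₂₎ ⊗ S h₍₁₎`, the Hopf module compatibility gives
`ρ (q m) = S(m₍₋₁₎₍₂₎) m₍₀₎₍₋₁₎ ⊗ S(m₍₋₁₎₍₁₎) · m₍₀₎₍₀₎`. Coassociativity of `ρ` lets the factor
`S(m₍₋₁₎₍₂₎) m₍₀₎₍₋₁₎` collapse by the antipode axiom, leaving `1 ⊗ q m`. Finally `q` fixes every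
coinvariant `n`, since `q n = S 1 · n = n`; hence `q ∘ q = q`.
-/

namespace LinearMap

open Coalgebra HopfAlgebra WithConv

variable {R C : Type*} [CommSemiring R] [Semiring C] [HopfAlgebra R C]

local notation "μ" => mul' R C
local notation "δ" => comul (R := R) (A := C)
local notation "𝑺" => antipode R (A := C)
local notation "η" => Algebra.linearMap R C

-- In Sweedler notation: `∑ S c₍₂₎ c₍₃₎ ⊗ S c₍₁₎ c₍₄₎ = ε(c₍₂₎) 1 ⊗ S c₍₁₎ c₍₃₎ = ε(c) 1 ⊗ 1`.
lemma comul_left_inv :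
    toConv (map 𝑺 𝑺 ∘ₗ (TensorProduct.comm R C C).toLinearMap ∘ₗ δ) * toConv δ = 1 := by
  apply WithConv.ext
  simp only [convMul_def, convOne_def, ofConv_toConv]
  calc mul' R (C ⊗[R] C) ∘ₗ map (map 𝑺 𝑺 ∘ₗ (TensorProduct.comm R C C).toLinearMap ∘ₗ δ) δ ∘ₗ δ
      = map (μ ∘ₗ 𝑺.rTensor C) (μ ∘ₗ 𝑺.rTensor C) ∘ₗ map δ id ∘ₗ
          (TensorProduct.assoc R C C C).toLinearMap ∘ₗ
          map ((TensorProduct.comm R C C).toLinearMap ∘ₗ δ) id ∘ₗ δ := by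
        rw [mul'_tensor]
        simp only [coassoc_simps]
    _ = map (η ∘ₗ counit) (μ ∘ₗ 𝑺.rTensor C) ∘ₗ (TensorProduct.assoc R C C C).toLinearMap ∘ₗ
          map ((TensorProduct.comm R C C).toLinearMap ∘ₗ δ) id ∘ₗ δ := by
        rw [← comp_assoc, ← map_comp, comp_assoc, mul_antipode_rTensor_comul, comp_id]
    _ = map η (μ ∘ₗ 𝑺.rTensor C) ∘ₗ (TensorProduct.assoc R R C C).toLinearMap ∘ₗ
          map (TensorProduct.comm R C R).toLinearMap id ∘ₗ map (map id counit ∘ₗ δ) id ∘ₗ δ := by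
        simp only [coassoc_simps]
    _ = map η (μ ∘ₗ 𝑺.rTensor C ∘ₗ δ) ∘ₗ (TensorProduct.lid R C).symm.toLinearMap := by
        rw [CoassocSimps.map_counit_comp_comul_right]
        simp only [coassoc_simps]
    _ = Algebra.linearMap R (C ⊗[R] C) ∘ₗ counit := by
        rw [mul_antipode_rTensor_comul]
        ext c
        simp [Algebra.algebraMap_eq_smul_one, Algebra.TensorProduct.one_def]

end LinearMap

namespace HopfAlgebra

open Coalgebra WithConv

theorem comul_comp_antipode {R C : Type*} [CommSemiring R] [Semiring C] [HopfAlgebra R C] :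
    comul ∘ₗ antipode R (A := C) =
      map (antipode R) (antipode R) ∘ₗ (TensorProduct.comm R C C).toLinearMap ∘ₗ comul :=
  congrArg ofConv (left_inv_eq_right_inv LinearMap.comul_left_inv LinearMap.comul_right_inv).symm

end HopfAlgebra

namespace HopfModule

open Coalgebra HopfAlgebra

variable {R H M : Type*} [CommSemiring R] [Semiring H] [HopfAlgebra R H]
  [AddCommMonoid M] [Module R M] (act : H →ₗ[R] M →ₗ[R] M) (ρ : M →ₗ[R] H ⊗[R] M)

noncomputable def coinvariantProjection : M →ₗ[R] M :=
  lift act ∘ₗ map (antipode R) LinearMap.id ∘ₗ ρ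

/-- `h ⊗ m ↦ S(h) m₍₋₁₎ ⊗ m₍₀₎` -/
noncomputable def collapse : H ⊗[R] M →ₗ[R] H ⊗[R] M :=
  map (LinearMap.mul' R H ∘ₗ (antipode R).rTensor H) LinearMap.id ∘ₗ
    (TensorProduct.assoc R H H M).symm.toLinearMap ∘ₗ ρ.lTensor H

/-- `h ⊗ (k ⊗ m) ↦ k ⊗ h · m` -/
noncomputable def actRight : H ⊗[R] (H ⊗[R] M) →ₗ[R] H ⊗[R] M :=
  lift (LinearMap.lTensorHom H ∘ₗ act)

lemma coinvariantProjection_apply_of_coinvariant (hact_one : act 1 = LinearMap.id) {n : M}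
    (hn : ρ n = 1 ⊗ₜ n) : coinvariantProjection act ρ n = n := by
  simp [coinvariantProjection, hn, antipode_one, hact_one]

lemma collapse_comp_coaction
    (hcounit : ∀ m : M, TensorProduct.lid R M (map (counit (R := R)) LinearMap.id (ρ m)) = m)
    (hcoassoc : ∀ m : M, TensorProduct.assoc R H H M (map (comul (R := R)) LinearMap.id (ρ m)) =
      map LinearMap.id ρ (ρ m)) :
    collapse ρ ∘ₗ ρ = TensorProduct.mk R H M 1 := by
  have hunit : map (Algebra.linearMap R H ∘ₗ counit (R := R) (A := H)) (LinearMap.id (M := M)) =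
      TensorProduct.mk R H M 1 ∘ₗ (TensorProduct.lid R M).toLinearMap ∘ₗ
        map (counit (R := R)) LinearMap.id := by
    ext h m
    simp [Algebra.algebraMap_eq_smul_one, smul_tmul]
  ext m
  calc collapse ρ (ρ m)
      = map (LinearMap.mul' R H ∘ₗ (antipode R).rTensor H ∘ₗ comul) LinearMap.id (ρ m) := by
        rw [collapse, LinearMap.comp_apply, LinearMap.comp_apply, LinearMap.lTensor, ← hcoassoc,
          LinearEquiv.coe_coe, LinearEquiv.symm_apply_apply, map_map, LinearMap.comp_assoc,
          LinearMap.id_comp]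
    _ = 1 ⊗ₜ m := by
        rw [mul_antipode_rTensor_comul, hunit]
        simp only [LinearMap.comp_apply, LinearEquiv.coe_coe, hcounit, TensorProduct.mk_apply]

-- `ρ (S h · m) = S h₍₂₎ m₍₋₁₎ ⊗ S h₍₁₎ · m₍₀₎`
lemma coaction_comp_lift_act_comp_map_antipode
    (hhopf : ρ ∘ₗ lift act = map (LinearMap.mul' R H) (lift act) ∘ₗ
      (tensorTensorTensorComm R H H H M).toLinearMap ∘ₗ map (comul (R := R)) ρ) :
    ρ ∘ₗ lift act ∘ₗ map (antipode R) LinearMap.id =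
      actRight act ∘ₗ map (antipode R) (collapse ρ) ∘ₗ
        (TensorProduct.assoc R H H M).toLinearMap ∘ₗ (comul (R := R)).rTensor M := by
  have hswap : map (LinearMap.mul' R H) (lift act) ∘ₗ
      (tensorTensorTensorComm R H H H M).toLinearMap ∘ₗ
        map (map (antipode R) (antipode R) ∘ₗ (TensorProduct.comm R H H).toLinearMap) ρ =
      actRight act ∘ₗ map (antipode R) (collapse ρ) ∘ₗ
        (TensorProduct.assoc R H H M).toLinearMap := by
    ext a b m
    simp only [AlgebraTensorModule.curry_apply, curry_apply, LinearMap.coe_restrictScalars,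
      LinearMap.comp_apply, map_tmul, LinearEquiv.coe_coe, TensorProduct.comm_tmul, assoc_tmul,
      collapse, LinearMap.lTensor_tmul]
    induction ρ m using TensorProduct.induction_on with
    | zero => simp
    | tmul c n => simp [actRight]
    | add s t hs ht => simp only [tmul_add, map_add, hs, ht]
  calc ρ ∘ₗ lift act ∘ₗ map (antipode R) LinearMap.id
      = (map (LinearMap.mul' R H) (lift act) ∘ₗ (tensorTensorTensorComm R H H H M).toLinearMap ∘ₗ
          map (map (antipode R) (antipode R) ∘ₗ (TensorProduct.comm R H H).toLinearMap) ρ) ∘ₗ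
          (comul (R := R)).rTensor M := by
        rw [← LinearMap.comp_assoc, hhopf]
        simp only [LinearMap.rTensor_def, LinearMap.comp_assoc, ← map_comp, LinearMap.comp_id,
          comul_comp_antipode]
    _ = _ := by rw [hswap]; simp only [LinearMap.comp_assoc]

lemma coaction_comp_coinvariantProjection
    (hcounit : ∀ m : M, TensorProduct.lid R M (map (counit (R := R)) LinearMap.id (ρ m)) = m)
    (hcoassoc : ∀ m : M, TensorProduct.assoc R H H M (map (comul (R := R)) LinearMap.id (ρ m)) =
      map LinearMap.id ρ (ρ m))
    (hhopf : ρ ∘ₗ lift act = map (LinearMap.mul' R H) (lift act) ∘ₗ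
      (tensorTensorTensorComm R H H H M).toLinearMap ∘ₗ map (comul (R := R)) ρ) :
    ρ ∘ₗ coinvariantProjection act ρ = TensorProduct.mk R H M 1 ∘ₗ coinvariantProjection act ρ := by
  have hcoassoc' : (TensorProduct.assoc R H H M).toLinearMap ∘ₗ (comul (R := R)).rTensor M ∘ₗ ρ =
      ρ.lTensor H ∘ₗ ρ := LinearMap.ext hcoassoc
  have hunit : actRight act ∘ₗ map (antipode R) (TensorProduct.mk R H M 1) =
      TensorProduct.mk R H M 1 ∘ₗ lift act ∘ₗ map (antipode R) LinearMap.id := by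
    ext h m
    simp [actRight]
  have hexpand := congrArg (· ∘ₗ ρ) (coaction_comp_lift_act_comp_map_antipode act ρ hhopf)
  simp only [LinearMap.comp_assoc] at hexpand
  calc ρ ∘ₗ coinvariantProjection act ρ
      = actRight act ∘ₗ map (antipode R) (collapse ρ) ∘ₗ ρ.lTensor H ∘ₗ ρ := by
        rw [coinvariantProjection, hexpand, hcoassoc']
    _ = actRight act ∘ₗ map (antipode R) (TensorProduct.mk R H M 1) ∘ₗ ρ := by
        rw [← collapse_comp_coaction ρ hcounit hcoassoc, ← LinearMap.map_comp_lTensor,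
          LinearMap.comp_assoc]
    _ = TensorProduct.mk R H M 1 ∘ₗ coinvariantProjection act ρ := by
        rw [← LinearMap.comp_assoc, hunit]
        rfl

end HopfModule

theorem hopf_module_projection_general (F H M : Type*) [Field F] [Ring H]
    [HopfAlgebra F H] [AddCommGroup M] [Module F M]
    (act : H →ₗ[F] M →ₗ[F] M)
    (hact_one : act 1 = LinearMap.id)
    (ρ : M →ₗ[F] H ⊗[F] M)
    (hcounit : ∀ m : M,
      (TensorProduct.lid F M)
        (TensorProduct.map (Coalgebra.counit (R := F)) LinearMap.id (ρ m)) = m)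
    (hcoassoc : ∀ m : M,
      (TensorProduct.assoc F H H M)
        (TensorProduct.map (Coalgebra.comul (R := F)) LinearMap.id (ρ m)) =
      TensorProduct.map LinearMap.id ρ (ρ m))
    (hhopf : ρ ∘ₗ TensorProduct.lift act =
      TensorProduct.map (LinearMap.mul' F H) (TensorProduct.lift act) ∘ₗ
        (TensorProduct.tensorTensorTensorComm F H H H M).toLinearMap ∘ₗ
          TensorProduct.map (Coalgebra.comul (R := F)) ρ) :
    (TensorProduct.lift act ∘ₗ
        TensorProduct.map (HopfAlgebra.antipode (R := F)) LinearMap.id ∘ₗ ρ) ∘ₗ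
      (TensorProduct.lift act ∘ₗ
        TensorProduct.map (HopfAlgebra.antipode (R := F)) LinearMap.id ∘ₗ ρ) =
      TensorProduct.lift act ∘ₗ
        TensorProduct.map (HopfAlgebra.antipode (R := F)) LinearMap.id ∘ₗ ρ ∧
    ρ ∘ₗ (TensorProduct.lift act ∘ₗ
        TensorProduct.map (HopfAlgebra.antipode (R := F)) LinearMap.id ∘ₗ ρ) =
      TensorProduct.mk F H M 1 ∘ₗ
        (TensorProduct.lift act ∘ₗ
          TensorProduct.map (HopfAlgebra.antipode (R := F)) LinearMap.id ∘ₗ ρ) := by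
  have hcoinv := HopfModule.coaction_comp_coinvariantProjection act ρ hcounit hcoassoc hhopf
  refine ⟨LinearMap.ext fun m => ?_, hcoinv⟩
  exact HopfModule.coinvariantProjection_apply_of_coinvariant act ρ hact_one
    (LinearMap.congr_fun hcoinv m)

/-- For a left Hopf module `M` over a Hopf algebra `H`, the map
`q_M(m) = S(m₍₋₁₎) · m₍₀₎` is idempotent and its image consists of
coinvariants: `ρ (q_M m) = 1 ⊗ q_M m`. -/
theorem hopf_module_projection (F H M : Type*) [Field F] [Ring H]
    [HopfAlgebra F H] [AddCommGroup M] [Module F M]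
    (act : H →ₗ[F] M →ₗ[F] M)
    (hact_one : act 1 = LinearMap.id)
    (hact_mul : ∀ h h' : H, act (h * h') = act h ∘ₗ act h')
    (ρ : M →ₗ[F] H ⊗[F] M)
    (hcounit : ∀ m : M,
      (TensorProduct.lid F M)
        (TensorProduct.map (Coalgebra.counit (R := F)) LinearMap.id (ρ m)) = m)
    (hcoassoc : ∀ m : M,
      (TensorProduct.assoc F H H M)
        (TensorProduct.map (Coalgebra.comul (R := F)) LinearMap.id (ρ m)) =
      TensorProduct.map LinearMap.id ρ (ρ m))
    (hhopf : ρ ∘ₗ TensorProduct.lift act =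
      TensorProduct.map (LinearMap.mul' F H) (TensorProduct.lift act) ∘ₗ
        (TensorProduct.tensorTensorTensorComm F H H H M).toLinearMap ∘ₗ
          TensorProduct.map (Coalgebra.comul (R := F)) ρ) :
    (TensorProduct.lift act ∘ₗ
        TensorProduct.map (HopfAlgebra.antipode (R := F)) LinearMap.id ∘ₗ ρ) ∘ₗ
      (TensorProduct.lift act ∘ₗ
        TensorProduct.map (HopfAlgebra.antipode (R := F)) LinearMap.id ∘ₗ ρ) =
      TensorProduct.lift act ∘ₗ
        TensorProduct.map (HopfAlgebra.antipode (R := F)) LinearMap.id ∘ₗ ρ ∧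
    ρ ∘ₗ (TensorProduct.lift act ∘ₗ
        TensorProduct.map (HopfAlgebra.antipode (R := F)) LinearMap.id ∘ₗ ρ) =
      TensorProduct.mk F H M 1 ∘ₗ
        (TensorProduct.lift act ∘ₗ
          TensorProduct.map (HopfAlgebra.antipode (R := F)) LinearMap.id ∘ₗ ρ) :=
  hopf_module_projection_general F H M act hact_one ρ hcounit hcoassoc hhopf
end

section
/- Fundamental theorem of Hopf modules: for a Hopf algebra H over a field F and a left H-Hopf module M, the map θ : H ⊗ M^{coH} → M, θ(h ⊗ m) = h · m, is an isomorphism of left H-Hopf modules, with inverse m ↦ m_{[-1](1)} ⊗ S(m_{[-1](2)}) · m_{[0]}, where H ⊗ M^{coH} carries the action h' · (h ⊗ m) = h'h ⊗ m and coaction h ⊗ m ↦ h_{(1)} ⊗ h_{(2)} ⊗ m. -/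
/-!
The map `P m = S(m₍₋₁₎) • m₍₀₎` lands in the coinvariants, because `Δ(S h₍₁₎) (h₍₂₎ ⊗ 1) = 1 ⊗ S h`
in any Hopf algebra, and `P (h • m) = ε(h) m` for coinvariant `m`. Hence `m ↦ m₍₋₁₎ ⊗ P m₍₀₎`
inverts `θ`: one composite is `m₍₋₂₎ S(m₍₋₁₎) • m₍₀₎ = m` by counitality, the other is
`h₍₁₎ ⊗ ε(h₍₂₎) m = h ⊗ m`. Coassociativity rewrites this inverse as
`m₍₋₁₎₍₁₎ ⊗ S(m₍₋₁₎₍₂₎) • m₍₀₎`.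
-/

open TensorProduct Coalgebra HopfAlgebra WithConv

namespace Coalgebra

variable {R C N : Type*} [CommSemiring R] [AddCommMonoid C] [Module R C] [Coalgebra R C]
  [AddCommMonoid N] [Module R N]

lemma lTensor_smulRight_counit_comul (n : N) (a : C) :
    ((counit (R := R) (A := C)).smulRight n).lTensor C (comul a) = a ⊗ₜ n := by
  have h : ((counit (R := R) (A := C)).smulRight n).lTensor C =
      (TensorProduct.mk R C N).flip n ∘ₗ (_root_.TensorProduct.rid R C).toLinearMap ∘ₗ
        counit.lTensor C := by
    ext; simp
  simp [h]

end Coalgebra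

namespace HopfAlgebra

variable {R H : Type*} [CommSemiring R] [Semiring H] [HopfAlgebra R H]

lemma comul_antipode_convMul_comul :
    toConv (comul ∘ₗ antipode R) * toConv (comul (R := R) (A := H)) = 1 := by
  have hdistrib := LinearMap.algHom_comp_convMul_distrib (Bialgebra.comulAlgHom R H)
    (toConv (antipode R)) (toConv LinearMap.id)
  simp only [Bialgebra.toLinearMap_comulAlgHom, LinearMap.antipode_mul_id,
    LinearMap.comp_id] at hdistrib
  apply ofConv_injective
  rw [← hdistrib]
  ext
  simp [LinearMap.convOne_def]

lemma comul_convMul_includeRight_comp_antipode :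
    toConv (comul (R := R) (A := H)) *
        toConv (Algebra.TensorProduct.includeRight.toLinearMap ∘ₗ antipode R) =
      toConv (Algebra.TensorProduct.includeLeft (S := R) : H →ₐ[R] H ⊗[R] H).toLinearMap := by
  have hmul : LinearMap.mul' R (H ⊗[R] H) ∘ₗ
      map .id (Algebra.TensorProduct.includeRight.toLinearMap ∘ₗ antipode R) =
      (LinearMap.mul' R H ∘ₗ (antipode R).lTensor H).lTensor H ∘ₗ
        (TensorProduct.assoc R H H H).toLinearMap := by
    ext; simp
  apply ofConv_injective
  calc LinearMap.mul' R (H ⊗[R] H) ∘ₗ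
        map comul (Algebra.TensorProduct.includeRight.toLinearMap ∘ₗ antipode R) ∘ₗ comul
      = (LinearMap.mul' R H ∘ₗ (antipode R).lTensor H).lTensor H ∘ₗ
          (TensorProduct.assoc R H H H).toLinearMap ∘ₗ (comul (R := R) (A := H)).rTensor H ∘ₗ
            comul := by
        simp only [← LinearMap.comp_assoc, ← hmul]
        simp only [LinearMap.comp_assoc, LinearMap.map_comp_rTensor, LinearMap.id_comp]
    _ = ((LinearMap.mul' R H ∘ₗ (antipode R).lTensor H) ∘ₗ comul).lTensor H ∘ₗ comul := by
        rw [coassoc, ← LinearMap.comp_assoc, ← LinearMap.lTensor_comp]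
    _ = _ := by
        rw [LinearMap.comp_assoc, mul_antipode_lTensor_comul]
        ext h
        simp [LinearMap.lTensor_comp, lTensor_counit_comul]

/-- `Δ(S h₍₁₎) (h₍₂₎ ⊗ 1) = 1 ⊗ S h` -/
lemma comul_antipode_convMul_includeLeft :
    toConv (comul ∘ₗ antipode R) *
        toConv (Algebra.TensorProduct.includeLeft (S := R) : H →ₐ[R] H ⊗[R] H).toLinearMap =
      toConv (Algebra.TensorProduct.includeRight.toLinearMap ∘ₗ antipode R) := by
  rw [← comul_convMul_includeRight_comp_antipode, ← mul_assoc, comul_antipode_convMul_comul,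
    one_mul]

end HopfAlgebra

section

variable {F H M : Type*} [CommSemiring F] [Semiring H] [HopfAlgebra F H]
  [AddCommMonoid M] [Module F M]

structure IsHopfModule (act : H →ₗ[F] M →ₗ[F] M) (ρ : M →ₗ[F] H ⊗[F] M) : Prop where
  act_one : act 1 = LinearMap.id
  act_mul : ∀ h h' : H, act (h * h') = act h ∘ₗ act h'
  counit_coaction : (TensorProduct.lid F M).toLinearMap ∘ₗ counit.rTensor M ∘ₗ ρ = .id
  coassoc_coaction :
    (TensorProduct.assoc F H H M).toLinearMap ∘ₗ comul.rTensor M ∘ₗ ρ = ρ.lTensor H ∘ₗ ρ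
  coaction_act : ρ ∘ₗ lift act =
    map (LinearMap.mul' F H) (lift act) ∘ₗ
      (tensorTensorTensorComm F H H H M).toLinearMap ∘ₗ map comul ρ

def coinvariants (ρ : M →ₗ[F] H ⊗[F] M) : Submodule F M :=
  LinearMap.eqLocus ρ (TensorProduct.mk F H M 1)

lemma mem_coinvariants {ρ : M →ₗ[F] H ⊗[F] M} {m : M} :
    m ∈ coinvariants ρ ↔ ρ m = 1 ⊗ₜ m :=
  Iff.rfl

def projCoinvariants (act : H →ₗ[F] M →ₗ[F] M) (ρ : M →ₗ[F] H ⊗[F] M) : M →ₗ[F] M :=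
  lift act ∘ₗ (antipode F).rTensor M ∘ₗ ρ

def tensorCoinvariantsAct (act : H →ₗ[F] M →ₗ[F] M) (ρ : M →ₗ[F] H ⊗[F] M) :
    H ⊗[F] coinvariants ρ →ₗ[F] M :=
  lift act ∘ₗ (coinvariants ρ).subtype.lTensor H

/-- `(x ⊗ y) • (b ⊗ m) = (x b ⊗ y) • (1 ⊗ m)` for the diagonal action of `H ⊗ H` on `H ⊗ M`. -/
lemma map_mul'_lift_tensorTensorTensorComm_tmul_tmul (act : H →ₗ[F] M →ₗ[F] M)
    (d : H ⊗[F] H) (b : H) (m : M) :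
    map (LinearMap.mul' F H) (lift act) (tensorTensorTensorComm F H H H M (d ⊗ₜ (b ⊗ₜ m))) =
      (lift act).lTensor H (TensorProduct.assoc F H H M ((d * (b ⊗ₜ 1)) ⊗ₜ m)) := by
  induction d using TensorProduct.induction_on with
  | zero => simp
  | tmul x y => simp
  | add x y hx hy => simp only [add_mul, add_tmul, map_add, hx, hy]

namespace IsHopfModule

variable {act : H →ₗ[F] M →ₗ[F] M} {ρ : M →ₗ[F] H ⊗[F] M}

lemma act_mul_apply (hM : IsHopfModule act ρ) (a b : H) (x : M) :
    act (a * b) x = act a (act b x) := by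
  rw [hM.act_mul]; rfl

lemma act_algebraMap_apply (hM : IsHopfModule act ρ) (r : F) (x : M) :
    act (algebraMap F H r) x = r • x := by
  rw [Algebra.algebraMap_eq_smul_one, map_smul, LinearMap.smul_apply, hM.act_one,
    LinearMap.id_apply]

lemma lift_act_comp_lTensor_lift_act_comp_rTensor (hM : IsHopfModule act ρ) (g : H →ₗ[F] H) :
    lift act ∘ₗ (lift act ∘ₗ g.rTensor M).lTensor H ∘ₗ
        (TensorProduct.assoc F H H M).toLinearMap =
      lift act ∘ₗ (LinearMap.mul' F H ∘ₗ g.lTensor H).rTensor M := by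
  ext; simp [hM.act_mul_apply]

lemma lift_act_comp_rTensor_algebraLinearMap_comp_counit (hM : IsHopfModule act ρ) :
    lift act ∘ₗ (Algebra.linearMap F H ∘ₗ counit (A := H)).rTensor M =
      (TensorProduct.lid F M).toLinearMap ∘ₗ counit.rTensor M := by
  ext; simp [hM.act_algebraMap_apply]

lemma coaction_act_of_mem_coinvariants (hM : IsHopfModule act ρ) (a : H) {m : M}
    (hm : m ∈ coinvariants ρ) : ρ (act a m) = (act.flip m).lTensor H (comul (R := F) a) := by
  have hd : map (LinearMap.mul' F H) (lift act) ∘ₗ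
      (tensorTensorTensorComm F H H H M).toLinearMap ∘ₗ (TensorProduct.mk F _ _).flip (1 ⊗ₜ m) =
      (act.flip m).lTensor H := by
    ext; simp
  calc ρ (act a m) = (ρ ∘ₗ lift act) (a ⊗ₜ m) := rfl
    _ = _ := by
      rw [hM.coaction_act]
      simp [mem_coinvariants.mp hm, ← hd]

lemma projCoinvariants_act_of_mem_coinvariants (hM : IsHopfModule act ρ) (a : H) {m : M}
    (hm : m ∈ coinvariants ρ) : projCoinvariants act ρ (act a m) = counit (R := F) a • m := by
  have hd : lift act ∘ₗ (antipode F).rTensor M ∘ₗ (act.flip m).lTensor H =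
      act.flip m ∘ₗ LinearMap.mul' F H ∘ₗ (antipode F).rTensor H := by
    ext; simp [hM.act_mul_apply]
  calc projCoinvariants act ρ (act a m)
      = (lift act ∘ₗ (antipode F).rTensor M ∘ₗ (act.flip m).lTensor H) (comul a) := by
        simp only [projCoinvariants, LinearMap.comp_apply,
          hM.coaction_act_of_mem_coinvariants a hm]
    _ = counit a • m := by
        rw [hd]; simp [mul_antipode_rTensor_comul_apply, hM.act_algebraMap_apply]

lemma lift_act_comp_lTensor_projCoinvariants_comp_coaction (hM : IsHopfModule act ρ) :
    lift act ∘ₗ (projCoinvariants act ρ).lTensor H ∘ₗ ρ = .id :=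
  calc lift act ∘ₗ (projCoinvariants act ρ).lTensor H ∘ₗ ρ
      = lift act ∘ₗ (lift act ∘ₗ (antipode F).rTensor M).lTensor H ∘ₗ ρ.lTensor H ∘ₗ ρ := by
        simp only [projCoinvariants, LinearMap.lTensor_comp, LinearMap.comp_assoc]
    _ = (lift act ∘ₗ (lift act ∘ₗ (antipode F).rTensor M).lTensor H ∘ₗ
          (TensorProduct.assoc F H H M).toLinearMap) ∘ₗ comul.rTensor M ∘ₗ ρ := by
        rw [← hM.coassoc_coaction]; simp only [LinearMap.comp_assoc]
    _ = lift act ∘ₗ (LinearMap.mul' F H ∘ₗ (antipode F).lTensor H ∘ₗ comul).rTensor M ∘ₗ ρ := by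
        rw [hM.lift_act_comp_lTensor_lift_act_comp_rTensor]
        simp only [LinearMap.rTensor_comp, LinearMap.comp_assoc]
    _ = .id := by
        rw [mul_antipode_lTensor_comul, ← LinearMap.comp_assoc,
          hM.lift_act_comp_rTensor_algebraLinearMap_comp_counit, LinearMap.comp_assoc]
        exact hM.counit_coaction

lemma coaction_projCoinvariants (hM : IsHopfModule act ρ) (x : M) :
    ρ (projCoinvariants act ρ x) = 1 ⊗ₜ projCoinvariants act ρ x := by
  have hmap : map comul ρ ∘ₗ (antipode F).rTensor M =
      (comul ∘ₗ antipode F).rTensor (H ⊗[F] M) ∘ₗ ρ.lTensor H := by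
    ext; simp
  have hdiag : map (LinearMap.mul' F H) (lift act) ∘ₗ
      (tensorTensorTensorComm F H H H M).toLinearMap ∘ₗ
        (comul ∘ₗ antipode F).rTensor (H ⊗[F] M) ∘ₗ (TensorProduct.assoc F H H M).toLinearMap =
      (lift act).lTensor H ∘ₗ (TensorProduct.assoc F H H M).toLinearMap ∘ₗ
        (LinearMap.mul' F (H ⊗[F] H) ∘ₗ map (comul ∘ₗ antipode F)
          (Algebra.TensorProduct.includeLeft (S := F)).toLinearMap).rTensor M := by
    ext a b m
    simpa using map_mul'_lift_tensorTensorTensorComm_tmul_tmul act _ b m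
  have hunit : (lift act).lTensor H ∘ₗ (TensorProduct.assoc F H H M).toLinearMap ∘ₗ
      (Algebra.TensorProduct.includeRight.toLinearMap ∘ₗ antipode F).rTensor M =
      TensorProduct.mk F H M 1 ∘ₗ lift act ∘ₗ (antipode F).rTensor M := by
    ext; simp
  have hK := congrArg ofConv (comul_antipode_convMul_includeLeft (R := F) (H := H))
  simp only [LinearMap.convMul_def, ofConv_toConv] at hK
  calc ρ (projCoinvariants act ρ x)
      = map (LinearMap.mul' F H) (lift act) (tensorTensorTensorComm F H H H M
          ((comul ∘ₗ antipode F).rTensor (H ⊗[F] M) (ρ.lTensor H (ρ x)))) := by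
        rw [projCoinvariants, LinearMap.comp_apply, ← LinearMap.comp_apply ρ, hM.coaction_act]
        simp only [LinearMap.comp_apply, LinearEquiv.coe_coe]
        rw [← LinearMap.comp_apply (map comul ρ), hmap, LinearMap.comp_apply]
    _ = map (LinearMap.mul' F H) (lift act) (tensorTensorTensorComm F H H H M
          ((comul ∘ₗ antipode F).rTensor (H ⊗[F] M)
            (TensorProduct.assoc F H H M (comul.rTensor M (ρ x))))) := by
        rw [← LinearMap.comp_apply (ρ.lTensor H), ← hM.coassoc_coaction]; rfl
    _ = (lift act).lTensor H (TensorProduct.assoc F H H M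
          ((Algebra.TensorProduct.includeRight.toLinearMap ∘ₗ antipode F).rTensor M (ρ x))) := by
        have h := LinearMap.congr_fun hdiag (comul.rTensor M (ρ x))
        rw [← hK]
        simp only [LinearMap.comp_apply, LinearMap.rTensor_comp_apply, LinearEquiv.coe_coe] at h ⊢
        exact h
    _ = 1 ⊗ₜ projCoinvariants act ρ x := LinearMap.congr_fun hunit (ρ x)

lemma coaction_comp_tensorCoinvariantsAct (hM : IsHopfModule act ρ) :
    ρ ∘ₗ tensorCoinvariantsAct act ρ =
      map .id (tensorCoinvariantsAct act ρ) ∘ₗ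
        (TensorProduct.assoc F H H (coinvariants ρ)).toLinearMap ∘ₗ map comul .id := by
  ext a m
  have hd : (act.flip (m : M)).lTensor H =
      map .id (tensorCoinvariantsAct act ρ) ∘ₗ
        (TensorProduct.assoc F H H (coinvariants ρ)).toLinearMap ∘ₗ
          (TensorProduct.mk F _ _).flip m := by
    ext; simp [tensorCoinvariantsAct]
  simpa [tensorCoinvariantsAct] using
    (hM.coaction_act_of_mem_coinvariants a m.2).trans (LinearMap.congr_fun hd (comul a))

def toCoinvariants (hM : IsHopfModule act ρ) : M →ₗ[F] coinvariants ρ :=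
  (projCoinvariants act ρ).codRestrict _
    fun x ↦ mem_coinvariants.mpr (hM.coaction_projCoinvariants x)

lemma toCoinvariants_act (hM : IsHopfModule act ρ) (a : H) (m : coinvariants ρ) :
    hM.toCoinvariants (act a m) = counit (R := F) a • m :=
  Subtype.ext (hM.projCoinvariants_act_of_mem_coinvariants a m.2)

def toTensorCoinvariants (hM : IsHopfModule act ρ) : M →ₗ[F] H ⊗[F] coinvariants ρ :=
  hM.toCoinvariants.lTensor H ∘ₗ ρ

lemma tensorCoinvariantsAct_comp_toTensorCoinvariants (hM : IsHopfModule act ρ) :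
    tensorCoinvariantsAct act ρ ∘ₗ hM.toTensorCoinvariants = .id := by
  rw [tensorCoinvariantsAct, toTensorCoinvariants, LinearMap.comp_assoc, ← LinearMap.comp_assoc ρ,
    ← LinearMap.lTensor_comp, toCoinvariants, LinearMap.subtype_comp_codRestrict]
  exact hM.lift_act_comp_lTensor_projCoinvariants_comp_coaction

lemma toTensorCoinvariants_comp_tensorCoinvariantsAct (hM : IsHopfModule act ρ) :
    hM.toTensorCoinvariants ∘ₗ tensorCoinvariantsAct act ρ = .id := by
  refine TensorProduct.ext' fun a m ↦ ?_
  have hm : hM.toCoinvariants ∘ₗ act.flip (m : M) = (counit (R := F) (A := H)).smulRight m := by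
    ext; simp [toCoinvariants_act]
  simp only [toTensorCoinvariants, tensorCoinvariantsAct, LinearMap.comp_apply,
    LinearMap.lTensor_tmul, Submodule.subtype_apply, lift.tmul, LinearMap.id_apply]
  rw [hM.coaction_act_of_mem_coinvariants a m.2, ← LinearMap.lTensor_comp_apply, hm,
    lTensor_smulRight_counit_comul]

def tensorCoinvariantsEquiv (hM : IsHopfModule act ρ) : H ⊗[F] coinvariants ρ ≃ₗ[F] M :=
  .ofLinearMap _ _ hM.tensorCoinvariantsAct_comp_toTensorCoinvariants
    hM.toTensorCoinvariants_comp_tensorCoinvariantsAct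

lemma lTensor_subtype_toTensorCoinvariants (hM : IsHopfModule act ρ) (y : M) :
    (coinvariants ρ).subtype.lTensor H (hM.toTensorCoinvariants y) =
      (lift act ∘ₗ (antipode F).rTensor M).lTensor H
        (TensorProduct.assoc F H H M (comul.rTensor M (ρ y))) :=
  calc (coinvariants ρ).subtype.lTensor H (hM.toTensorCoinvariants y)
      = (projCoinvariants act ρ).lTensor H (ρ y) := by
        rw [toTensorCoinvariants, LinearMap.comp_apply, ← LinearMap.lTensor_comp_apply]; rfl
    _ = (lift act ∘ₗ (antipode F).rTensor M).lTensor H (ρ.lTensor H (ρ y)) := by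
        rw [projCoinvariants, ← LinearMap.comp_assoc ρ, LinearMap.lTensor_comp_apply]
    _ = _ := by
        rw [← LinearMap.comp_apply (ρ.lTensor H), ← hM.coassoc_coaction]; rfl

end IsHopfModule

end

/-- Fundamental theorem of Hopf modules: for a left Hopf module `M` over a
Hopf algebra `H`, the map `θ : H ⊗ M^{coH} → M`, `h ⊗ m ↦ h · m`, is an
isomorphism of Hopf modules, with inverse
`m ↦ m₍₋₁₎₍₁₎ ⊗ S(m₍₋₁₎₍₂₎) · m₍₀₎`. -/
theorem fundamental_theorem_hopf_modules (F H M : Type*) [Field F] [Ring H]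
    [HopfAlgebra F H] [AddCommGroup M] [Module F M]
    (act : H →ₗ[F] M →ₗ[F] M)
    (hact_one : act 1 = LinearMap.id)
    (hact_mul : ∀ h h' : H, act (h * h') = act h ∘ₗ act h')
    (ρ : M →ₗ[F] H ⊗[F] M)
    (hcounit : ∀ m : M,
      (TensorProduct.lid F M)
        (TensorProduct.map (Coalgebra.counit (R := F)) LinearMap.id (ρ m)) = m)
    (hcoassoc : ∀ m : M,
      (TensorProduct.assoc F H H M)
        (TensorProduct.map (Coalgebra.comul (R := F)) LinearMap.id (ρ m)) =
      TensorProduct.map LinearMap.id ρ (ρ m))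
    (hhopf : ρ ∘ₗ TensorProduct.lift act =
      TensorProduct.map (LinearMap.mul' F H) (TensorProduct.lift act) ∘ₗ
        (TensorProduct.tensorTensorTensorComm F H H H M).toLinearMap ∘ₗ
          TensorProduct.map (Coalgebra.comul (R := F)) ρ)
    -- the coinvariants `M^{coH} = {m | ρ m = 1 ⊗ m}` as a submodule
    (coinv : Submodule F M)
    (hcoinv : coinv = LinearMap.ker (ρ - TensorProduct.mk F H M 1))
    -- `θ : H ⊗ M^{coH} → M`, `h ⊗ m ↦ h · m`
    (θ : H ⊗[F] coinv →ₗ[F] M)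
    (hθ : θ = TensorProduct.lift act ∘ₗ TensorProduct.map LinearMap.id coinv.subtype) :
    -- θ is bijective
    Function.Bijective θ ∧
    -- θ is H-linear for the action h' · (h ⊗ m) = h'h ⊗ m
    (∀ (h' h : H) (m : coinv),
      θ ((h' * h) ⊗ₜ[F] m) = TensorProduct.lift act (h' ⊗ₜ[F] θ (h ⊗ₜ[F] m))) ∧
    -- θ is H-colinear for the coaction h ⊗ m ↦ h₍₁₎ ⊗ (h₍₂₎ ⊗ m)
    (ρ ∘ₗ θ =
      TensorProduct.map LinearMap.id θ ∘ₗ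
        (TensorProduct.assoc F H H coinv).toLinearMap ∘ₗ
          TensorProduct.map (Coalgebra.comul (R := F)) LinearMap.id) ∧
    -- the inverse of θ is m ↦ m₍₋₁₎₍₁₎ ⊗ S(m₍₋₁₎₍₂₎) · m₍₀₎
    (∀ x : H ⊗[F] coinv,
      (TensorProduct.map LinearMap.id
          (TensorProduct.lift act ∘ₗ
            TensorProduct.map (HopfAlgebra.antipode (R := F)) LinearMap.id) ∘ₗ
        (TensorProduct.assoc F H H M).toLinearMap ∘ₗ
          TensorProduct.map (Coalgebra.comul (R := F)) LinearMap.id ∘ₗ ρ) (θ x) =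
        TensorProduct.map LinearMap.id coinv.subtype x) := by
  have hM : IsHopfModule act ρ :=
    ⟨hact_one, hact_mul, LinearMap.ext hcounit, LinearMap.ext hcoassoc, hhopf⟩
  obtain rfl : coinv = coinvariants ρ := hcoinv.trans (LinearMap.eqLocus_eq_ker_sub _ _).symm
  subst hθ
  refine ⟨hM.tensorCoinvariantsEquiv.bijective, fun h' h m ↦ hM.act_mul_apply h' h m,
    hM.coaction_comp_tensorCoinvariantsAct, fun x ↦ ?_⟩
  exact (hM.lTensor_subtype_toTensorCoinvariants _).symm.trans <| congrArg _ <|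
    LinearMap.congr_fun hM.toTensorCoinvariants_comp_tensorCoinvariantsAct x
end
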